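/- arXiv:2108.11549 — 2 statements merged into one kernel-verified Lean document; each statement's English description precedes it below -/
import Mathlib

section
/- Update affordability (cosine, dissimilar, main case): Let ε ∈ (0,1], ρ ∈ (0,1), and let a, d[u], d[v] be positive reals with a/√(d[u]d[v]) ≤ (1 + ρ/2)ε and min{d[u],d[v]} ≥ 0.81ε²·max{d[u],d[v]}. Then for any nonnegative integers k ≤ 0.45ρε²·max{d[u],d[v]} and 0 ≤ t ≤ k, (a + k)/√((d[u]+t)(d[v]+k−t)) ≤ (1+ρ)ε. -/
/-!
Adding `k` common neighbours only enlarges the denominator, so the updated cosine is at most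
`(a + k) / √(d[u] d[v])`. The degree gap gives `√(d[u] d[v]) ≥ 0.9 ε · max{d[u], d[v]}`, hence the
`k` new common neighbours contribute at most `0.45 ρ ε² max / (0.9 ε max) = (ρ / 2) ε`.
-/

theorem mul_max_le_sqrt_mul_of_sq_mul_max_le_min {x y c : ℝ} (hx : 0 ≤ x)
    (h : c ^ 2 * max x y ≤ min x y) : c * max x y ≤ √(x * y) := by
  have hmax : 0 ≤ max x y := le_max_of_le_left hx
  apply Real.le_sqrt_of_sq_le
  calc (c * max x y) ^ 2 = c ^ 2 * max x y * max x y := by ring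
    _ ≤ min x y * max x y := by gcongr
    _ = x * y := min_mul_max x y

theorem div_sqrt_mul_add_le_div_sqrt_mul {a x y s t : ℝ} (ha : 0 ≤ a) (hx : 0 < x) (hy : 0 < y)
    (hs : 0 ≤ s) (ht : 0 ≤ t) : a / √((x + s) * (y + t)) ≤ a / √(x * y) := by
  apply div_le_div_of_nonneg_left ha (Real.sqrt_pos.mpr (mul_pos hx hy))
  apply Real.sqrt_le_sqrt
  gcongr <;> linarith

theorem cosine_dissimilar_affordability_main_general (ε ρ a du dv : ℝ)
    (hε : 0 < ε ∧ ε ≤ 1)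
    (ha : 0 < a) (hdu : 0 < du) (hdv : 0 < dv)
    (hsim : a / Real.sqrt (du * dv) ≤ (1 + ρ / 2) * ε)
    (hgap : min du dv ≥ 0.81 * ε ^ 2 * max du dv) :
    ∀ k t : ℕ, (k : ℝ) ≤ 0.45 * ρ * ε ^ 2 * max du dv → t ≤ k →
      (a + (k : ℝ)) / Real.sqrt ((du + (t : ℝ)) * (dv + ((k : ℝ) - (t : ℝ))))
        ≤ (1 + ρ) * ε := by
  intro k t hk htk
  have hscale : 0 < 0.9 * ε * max du dv := by
    have hmax : 0 < max du dv := lt_max_of_lt_left hdu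
    have hε0 := hε.1
    positivity
  have hsqrt : 0.9 * ε * max du dv ≤ √(du * dv) :=
    mul_max_le_sqrt_mul_of_sq_mul_max_le_min hdu.le (by linarith)
  have hnew : (k : ℝ) / √(du * dv) ≤ ρ / 2 * ε :=
    calc (k : ℝ) / √(du * dv) ≤ k / (0.9 * ε * max du dv) :=
          div_le_div_of_nonneg_left k.cast_nonneg hscale hsqrt
      _ ≤ 0.45 * ρ * ε ^ 2 * max du dv / (0.9 * ε * max du dv) :=
          div_le_div_of_nonneg_right hk hscale.le
      _ = ρ / 2 * ε := by field_simp; ring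
  have htk' : (t : ℝ) ≤ k := by exact_mod_cast htk
  calc (a + k) / √((du + t) * (dv + (k - t)))
      ≤ (a + k) / √(du * dv) :=
        div_sqrt_mul_add_le_div_sqrt_mul (by positivity) hdu hdv t.cast_nonneg (by linarith)
    _ = a / √(du * dv) + k / √(du * dv) := add_div _ _ _
    _ ≤ (1 + ρ / 2) * ε + ρ / 2 * ε := add_le_add hsim hnew
    _ = (1 + ρ) * ε := by ring

/-- Update affordability (cosine, dissimilar, main case). -/
theorem cosine_dissimilar_affordability_main (ε ρ a du dv : ℝ)
    (hε : 0 < ε ∧ ε ≤ 1) (hρ : 0 < ρ ∧ ρ < 1)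
    (ha : 0 < a) (hdu : 0 < du) (hdv : 0 < dv)
    (hsim : a / Real.sqrt (du * dv) ≤ (1 + ρ / 2) * ε)
    (hgap : min du dv ≥ 0.81 * ε ^ 2 * max du dv) :
    ∀ k t : ℕ, (k : ℝ) ≤ 0.45 * ρ * ε ^ 2 * max du dv → t ≤ k →
      (a + (k : ℝ)) / Real.sqrt ((du + (t : ℝ)) * (dv + ((k : ℝ) - (t : ℝ))))
        ≤ (1 + ρ) * ε :=
  cosine_dissimilar_affordability_main_general ε ρ a du dv hε ha hdu hdv hsim hgap
end

section
/- Update affordability (cosine, similar case): Let ε ∈ (0,1], ρ ∈ (0,1), and let a, d[u], d[v] be positive reals with a/√(d[u]d[v]) ≥ (1 − ρ/2)ε. Then for any nonnegative integers k ≤ (ρε/2)·min{d[u],d[v]} and 0 ≤ t ≤ min{k, d[u]−1} with k−t ≤ d[v]−1, (a − k)/√((d[u]−t)(d[v]−k+t)) ≥ (1−ρ)ε (assuming a ≥ k). -/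
/-!
Deleting edges only shrinks the denominator, so the cosine drops by at most
`k / √(d[u] d[v]) ≤ k / min d[u] d[v] ≤ ρε/2` from its value `≥ (1 - ρ/2)ε`.
-/

theorem Real.min_le_sqrt_mul (x y : ℝ) : min x y ≤ √(x * y) := by
  rcases le_or_gt 0 (min x y) with hm | hm
  · refine Real.le_sqrt_of_sq_le ?_
    rw [sq]
    exact mul_le_mul (min_le_left x y) (min_le_right x y) hm ((le_min_iff.1 hm).1)
  · exact hm.le.trans (Real.sqrt_nonneg _)

theorem div_sqrt_mul_le_div_sqrt_sub_mul_sub {a x y s t : ℝ} (ha : 0 ≤ a) (hs : 0 ≤ s)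
    (ht : 0 ≤ t) (hsx : s < x) (hty : t < y) :
    a / √(x * y) ≤ a / √((x - s) * (y - t)) := by
  have hpos : 0 < (x - s) * (y - t) := mul_pos (by linarith) (by linarith)
  refine div_le_div_of_nonneg_left ha (Real.sqrt_pos.2 hpos) (Real.sqrt_le_sqrt ?_)
  exact mul_le_mul (by linarith) (by linarith) (by linarith) (by linarith)

theorem div_sqrt_mul_le_of_le_mul_min {k c x y : ℝ} (hk : 0 ≤ k) (hx : 0 < x) (hy : 0 < y)
    (hkc : k ≤ c * min x y) : k / √(x * y) ≤ c := by
  have hm : 0 < min x y := lt_min hx hy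
  calc k / √(x * y) ≤ k / min x y := div_le_div_of_nonneg_left hk hm (Real.min_le_sqrt_mul x y)
    _ ≤ c := (div_le_iff₀ hm).2 hkc

theorem cosine_similar_affordability_general (ε ρ a du dv : ℝ)
    (hdu : 0 < du) (hdv : 0 < dv)
    (hsim : a / Real.sqrt (du * dv) ≥ (1 - ρ / 2) * ε) :
    ∀ k t : ℕ, (k : ℝ) ≤ ρ * ε / 2 * min du dv → t ≤ k →
      (t : ℝ) ≤ du - 1 → (k : ℝ) - (t : ℝ) ≤ dv - 1 → (k : ℝ) ≤ a →
      (a - (k : ℝ)) / Real.sqrt ((du - (t : ℝ)) * (dv - ((k : ℝ) - (t : ℝ))))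
        ≥ (1 - ρ) * ε := by
  intro k t hk htk ht hkt hka
  have hkt0 : (0 : ℝ) ≤ k - t := sub_nonneg.2 (Nat.cast_le.2 htk)
  have hshrink := div_sqrt_mul_le_div_sqrt_sub_mul_sub (sub_nonneg.2 hka) t.cast_nonneg hkt0
    (by linarith : (t : ℝ) < du) (by linarith : (k : ℝ) - t < dv)
  have hloss := div_sqrt_mul_le_of_le_mul_min k.cast_nonneg hdu hdv hk
  calc (1 - ρ) * ε = (1 - ρ / 2) * ε - ρ * ε / 2 := by ring
    _ ≤ a / √(du * dv) - k / √(du * dv) := sub_le_sub hsim hloss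
    _ = (a - k) / √(du * dv) := (sub_div _ _ _).symm
    _ ≤ _ := hshrink

/-- Update affordability (cosine, similar case): the similar label remains
    valid after k ≤ (ρε/2)·d_min affecting deletions. -/
theorem cosine_similar_affordability (ε ρ a du dv : ℝ)
    (hε : 0 < ε ∧ ε ≤ 1) (hρ : 0 < ρ ∧ ρ < 1)
    (ha : 0 < a) (hdu : 0 < du) (hdv : 0 < dv)
    (hsim : a / Real.sqrt (du * dv) ≥ (1 - ρ / 2) * ε) :
    ∀ k t : ℕ, (k : ℝ) ≤ ρ * ε / 2 * min du dv → t ≤ k →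
      (t : ℝ) ≤ du - 1 → (k : ℝ) - (t : ℝ) ≤ dv - 1 → (k : ℝ) ≤ a →
      (a - (k : ℝ)) / Real.sqrt ((du - (t : ℝ)) * (dv - ((k : ℝ) - (t : ℝ))))
        ≥ (1 - ρ) * ε :=
  cosine_similar_affordability_general ε ρ a du dv hdu hdv hsim
end
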